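/- arXiv:1401.6512 — 6 statements merged into one kernel-verified Lean document; each statement's English description precedes it below -/
import Mathlib

section
/- Assume C_R = C_R(X) is invertible and set B = C_R⁻¹·R. Then for every t = 1,…,T and every m = 1,…,M, one has the identity in ℂ^Q: A(t)·x_m(t) = A[:,1:MQ]·diag(B(t))·x_m[1:MQ], where B(t) ∈ ℂ^{MQ} is the t-th column of B. (This is equation (9) of the paper.) -/
open Matrix

noncomputable section

/-- The column index `(m-1)Q + q` (0-indexed: `m*Q + q`) among the first `MQ`
columns, as an index into `Fin T`. -/
def emb (M Q T : ℕ) (h : M * Q ≤ T) (p : Fin M × Fin Q) : Fin T :=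
  ⟨p.1.1 * Q + p.2.1, by
    have hm := p.1.2
    have hq := p.2.2
    have h1 : p.1.1 * Q + p.2.1 < (p.1.1 + 1) * Q := by
      have : (p.1.1 + 1) * Q = p.1.1 * Q + Q := by ring
      omega
    have h2 : (p.1.1 + 1) * Q ≤ M * Q := Nat.mul_le_mul_right Q hm
    omega⟩

/-- The column index `MQ + j` (0-indexed) as an index into `Fin T`, assuming
`M(Q+1) ≤ T`. -/
def tcol (M Q T : ℕ) (h : M * (Q + 1) ≤ T) (j : Fin M) : Fin T :=
  ⟨M * Q + j.1, by
    have hj := j.2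
    have : M * (Q + 1) = M * Q + M := by ring
    omega⟩

/-- `R(X) ∈ ℂ^{MQ×T}`: the block matrix whose `m`-th block of `Q` rows is
`A·diag(x_m)`; rows are indexed by pairs `(m, q)`. -/
def Rmat (M Q T : ℕ) (A : Matrix (Fin Q) (Fin T) ℂ) (X : Matrix (Fin M) (Fin T) ℂ) :
    Matrix (Fin M × Fin Q) (Fin T) ℂ :=
  Matrix.of fun p t => A p.2 t * X p.1 t

/-- `C_R(X) ∈ ℂ^{MQ×MQ}`: the submatrix of the first `MQ` columns of `R(X)`. -/
def CR (M Q T : ℕ) (h : M * Q ≤ T) (A : Matrix (Fin Q) (Fin T) ℂ)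
    (X : Matrix (Fin M) (Fin T) ℂ) : Matrix (Fin M × Fin Q) (Fin M × Fin Q) ℂ :=
  Matrix.of fun p p' => Rmat M Q T A X p (emb M Q T h p')

/-- `B = C_R⁻¹·R ∈ ℂ^{MQ×T}`, the reduced row echelon form representative. -/
def Bmat (M Q T : ℕ) (h : M * Q ≤ T) (A : Matrix (Fin Q) (Fin T) ℂ)
    (X : Matrix (Fin M) (Fin T) ℂ) : Matrix (Fin M × Fin Q) (Fin T) ℂ :=
  (CR M Q T h A X)⁻¹ * Rmat M Q T A X

/-- `J(X) ∈ ℂ^{MQ×MQ}`: the block matrix whose `j`-th block of `Q` rows is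
`A[:,1:MQ]·diag(B(MQ+j))`. -/
def Jmat (M Q T : ℕ) (h : M * (Q + 1) ≤ T) (A : Matrix (Fin Q) (Fin T) ℂ)
    (X : Matrix (Fin M) (Fin T) ℂ) : Matrix (Fin M × Fin Q) (Fin M × Fin Q) ℂ :=
  Matrix.of fun p p' =>
    A p.2 (emb M Q T (le_trans (Nat.mul_le_mul_left M (Nat.le_succ Q)) h) p')
      * Bmat M Q T (le_trans (Nat.mul_le_mul_left M (Nat.le_succ Q)) h) A X p'
          (tcol M Q T h p.1)

/-- equation (9): if `C_R(X)` is invertible and `B = C_R⁻¹·R`, then for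
every column `t` and every `m`, `A(t)·x_m(t) = A[:,1:MQ]·diag(B(t))·x_m[1:MQ]` in `ℂ^Q`. -/
theorem stmt6 (M Q T : ℕ) (hM : 0 < M) (hQ : 0 < Q) (hT : 0 < T) (h : M * Q ≤ T)
    (A : Matrix (Fin Q) (Fin T) ℂ) (X : Matrix (Fin M) (Fin T) ℂ)
    (hC : IsUnit (CR M Q T h A X)) (t : Fin T) (m : Fin M) :
    (fun q : Fin Q => A q t * X m t)
      = (Matrix.of fun (q : Fin Q) (p' : Fin M × Fin Q) =>
            A q (emb M Q T h p') * Bmat M Q T h A X p' t) *ᵥ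
          (fun p' : Fin M × Fin Q => X m (emb M Q T h p')) := by
  have hdet : IsUnit (CR M Q T h A X).det := (Matrix.isUnit_iff_isUnit_det _).mp hC
  have hCB : CR M Q T h A X * Bmat M Q T h A X = Rmat M Q T A X := by
    rw [Bmat, Matrix.mul_nonsing_inv_cancel_left _ _ hdet]
  funext q
  have key := congrFun (congrFun hCB (m, q)) t
  simp only [Matrix.mul_apply, CR, Rmat, Matrix.of_apply] at key
  simp only [Matrix.mulVec, dotProduct, Matrix.of_apply]
  rw [← key]
  exact Finset.sum_congr rfl fun p' _ => by ring
end
end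

section
/- Assume C_R = C_R(X) is invertible and set B = C_R⁻¹·R. Let t satisfy 1 ≤ t ≤ T and suppose A^1(t) ≠ 0, where A^1 is the first row of A. Then for every m = 1,…,M: x_m(t) = ( A^1[1:MQ]·diag(B(t))·x_m[1:MQ] ) / A^1(t), where A^1[1:MQ] ∈ ℂ^{MQ} is the vector of the first MQ entries of A^1 and B(t) is the t-th column of B. (This is the linear phase of the recovery algorithm.) -/
open Matrix

noncomputable section

/-- linear phase of the recovery algorithm: if `C_R(X)` is invertible,
`B = C_R⁻¹·R`, and `A^1(t) ≠ 0`, then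
`x_m(t) = (A^1[1:MQ]·diag(B(t))·x_m[1:MQ]) / A^1(t)` for every `m`.
The first row of `A` is indexed by `⟨0, hQ⟩`. -/
theorem stmt7 (M Q T : ℕ) (hM : 0 < M) (hQ : 0 < Q) (hT : 0 < T) (h : M * Q ≤ T)
    (A : Matrix (Fin Q) (Fin T) ℂ) (X : Matrix (Fin M) (Fin T) ℂ)
    (hC : IsUnit (CR M Q T h A X)) (t : Fin T)
    (hA1 : A ⟨0, hQ⟩ t ≠ 0) (m : Fin M) :
    X m t
      = (∑ p' : Fin M × Fin Q,
          A ⟨0, hQ⟩ (emb M Q T h p') * Bmat M Q T h A X p' t * X m (emb M Q T h p'))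
        / A ⟨0, hQ⟩ t := by
  have hdet : IsUnit (CR M Q T h A X).det := (Matrix.isUnit_iff_isUnit_det _).mp hC
  have hmul : CR M Q T h A X * Bmat M Q T h A X = Rmat M Q T A X := by
    rw [Bmat, ← Matrix.mul_assoc, Matrix.mul_nonsing_inv _ hdet, Matrix.one_mul]
  have key := congrFun (congrFun hmul (m, ⟨0, hQ⟩)) t
  simp only [Matrix.mul_apply, CR, Rmat, Matrix.of_apply] at key
  rw [eq_div_iff hA1, mul_comm, ← key]
  apply Finset.sum_congr rfl
  intro p' _
  ring
end
end

section
/- Assume the training condition x_m(MQ+n) = δ_{n−m} for 1 ≤ n, m ≤ M, that C_R = C_R(X) is invertible, and that J = J(X) is invertible. Then for each m = 1,…,M: x_m[1:MQ] = J⁻¹·v_m, where v_m ∈ ℂ^{MQ} is the stacked vector whose m-th block of size Q equals A(MQ+m) and whose other blocks are zero. In particular, the first MQ columns of X are uniquely determined by B and A. (This is equation (11) of the paper, the nonlinear phase of the recovery algorithm.) -/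
open Matrix

noncomputable section

/-- equation (11), nonlinear phase of the recovery algorithm: under the
training condition `x_m(MQ+n) = δ_{n-m}`, if `C_R(X)` and `J(X)` are invertible, then
for each `m`, `x_m[1:MQ] = J⁻¹·v_m`, where `v_m` has `m`-th block `A(MQ+m)` and all
other blocks zero. -/
theorem stmt9 (M Q T : ℕ) (hM : 0 < M) (hQ : 0 < Q) (hT : 0 < T) (h : M * (Q + 1) ≤ T)
    (A : Matrix (Fin Q) (Fin T) ℂ) (X : Matrix (Fin M) (Fin T) ℂ)
    (htrain : ∀ n m : Fin M, X m (tcol M Q T h n) = if n = m then 1 else 0)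
    (hC : IsUnit (CR M Q T (le_trans (Nat.mul_le_mul_left M (Nat.le_succ Q)) h) A X))
    (hJ : IsUnit (Jmat M Q T h A X)) (m : Fin M) :
    (fun p' : Fin M × Fin Q =>
        X m (emb M Q T (le_trans (Nat.mul_le_mul_left M (Nat.le_succ Q)) h) p'))
      = (Jmat M Q T h A X)⁻¹ *ᵥ
          (fun p : Fin M × Fin Q =>
            if p.1 = m then A p.2 (tcol M Q T h m) else 0) := by
  have hle : M * Q ≤ T := le_trans (Nat.mul_le_mul_left M (Nat.le_succ Q)) h
  have hCdet := (Matrix.isUnit_iff_isUnit_det _).mp hC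
  have hJdet := (Matrix.isUnit_iff_isUnit_det _).mp hJ
  have hCB : CR M Q T hle A X * Bmat M Q T hle A X = Rmat M Q T A X := by
    rw [Bmat, ← Matrix.mul_assoc, Matrix.mul_nonsing_inv _ hCdet, Matrix.one_mul]
  have key : Jmat M Q T h A X *ᵥ (fun p' => X m (emb M Q T hle p')) =
      (fun p : Fin M × Fin Q => if p.1 = m then A p.2 (tcol M Q T h m) else 0) := by
    funext p
    have h1 : ∀ p' : Fin M × Fin Q,
        Jmat M Q T h A X p p' * X m (emb M Q T hle p')
        = CR M Q T hle A X (m, p.2) p' * Bmat M Q T hle A X p' (tcol M Q T h p.1) := by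
      intro p'
      simp only [Jmat, CR, Rmat, Matrix.of_apply]
      ring
    have h2 : (Jmat M Q T h A X *ᵥ fun p' => X m (emb M Q T hle p')) p
        = (CR M Q T hle A X * Bmat M Q T hle A X) (m, p.2) (tcol M Q T h p.1) := by
      simp only [Matrix.mulVec, Matrix.mul_apply, dotProduct]
      exact Finset.sum_congr rfl fun p' _ => h1 p'
    rw [h2, hCB]
    simp only [Rmat, Matrix.of_apply, htrain p.1 m]
    by_cases hpm : p.1 = m <;> simp [hpm]
  calc (fun p' : Fin M × Fin Q => X m (emb M Q T hle p'))
      = (Jmat M Q T h A X)⁻¹ *ᵥ (Jmat M Q T h A X *ᵥ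
          fun p' => X m (emb M Q T hle p')) := by
        rw [Matrix.mulVec_mulVec, Matrix.nonsing_inv_mul _ hJdet, Matrix.one_mulVec]
    _ = _ := by rw [key]
end
end

section
/- Suppose that for each m = 1,…,M the Q×Q submatrix of A formed by its columns (m−1)Q+1,…,mQ is invertible. Then the set of matrices X₀ ∈ ℂ^{M×MQ} for which C_R is singular (where the first MQ columns of X are taken to be X₀) has Lebesgue measure zero; in particular, for almost every X₀ the matrix C_R is invertible, and hence R(X) has rank MQ, i.e., the row space of R(X) has dimension MQ. -/
/-!
`det C_R` is a polynomial in the entries of `X₀`. It does not vanish identically: taking `x_m` to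
be the indicator of the `m`-th block of `Q` columns turns `C_R`, after reordering rows and columns,
into the block diagonal matrix whose blocks are the invertible `Q × Q` blocks of `A`. The zero set
of a nonzero complex polynomial is Lebesgue-null, by induction on the number of variables and
Fubini: viewed as a polynomial in one variable, off the null zero set of its leading coefficient
every slice of the zero set is finite. So `C_R` is invertible for almost every `X₀`, and as `C_R`
is a column submatrix of `R`, the latter then has full row rank `MQ`.
-/

open Matrix

noncomputable section

open MeasureTheory

theorem volume_preserving_finCons {α : Type*} [MeasureSpace α] [SigmaFinite (volume : Measure α)]
    (n : ℕ) :
    MeasurePreserving (fun z : (Fin n → α) × α => (Fin.cons z.2 z.1 : Fin (n + 1) → α)) := by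
  have hswap : MeasurePreserving (Prod.swap : (Fin n → α) × α → α × (Fin n → α)) :=
    Measure.measurePreserving_swap
  convert (volume_preserving_piFinSuccAbove (fun _ : Fin (n + 1) => α) 0).symm.comp hswap
  ext z
  simp [MeasurableEquiv.piFinSuccAbove, Fin.insertNthEquiv]

namespace MvPolynomial

theorem volume_setOf_eval_eq_zero_fin :
    ∀ {n : ℕ} {p : MvPolynomial (Fin n) ℂ}, p ≠ 0 → volume {x | eval x p = 0} = 0
  | 0, p, hp => by
    obtain ⟨a, rfl⟩ := C_surjective (Fin 0) p
    have ha : a ≠ 0 := by rintro rfl; exact hp C_0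
    simp [ha]
  | n + 1, p, hp => by
    have hcons := volume_preserving_finCons (α := ℂ) n
    have hmeas : MeasurableSet {x : Fin (n + 1) → ℂ | eval x p = 0} :=
      (continuous_eval p).measurable (measurableSet_singleton 0)
    rw [← hcons.measure_preimage hmeas.nullMeasurableSet,
      Measure.volume_eq_prod, Measure.measure_prod_null (hcons.measurable hmeas)]
    set q := finSuccEquiv ℂ n p
    have hq : q.leadingCoeff ≠ 0 := by simpa [q] using hp
    filter_upwards [measure_eq_zero_iff_ae_notMem.mp (volume_setOf_eval_eq_zero_fin hq)]
      with xs hxs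
    have hslice : q.map (eval xs) ≠ 0 := fun h0 => hxs <| by
      simpa [Polynomial.coeff_map] using congrArg (·.coeff q.natDegree) h0
    refine measure_mono_null (fun x hx => ?_)
      ((Polynomial.finite_setOfPred_isRoot hslice).measure_zero volume)
    simpa [eval_eq_eval_mv_eval'] using hx

end MvPolynomial

section
variable {E F : Type*} [NormedAddCommGroup E] [NormedSpace ℝ E] [MeasurableSpace E]
  [BorelSpace E] [NormedAddCommGroup F] [NormedSpace ℝ F]
  [FiniteDimensional ℝ F] [MeasurableSpace F] [BorelSpace F]

theorem ContinuousLinearEquiv.addHaar_preimage_eq_zero (μ : Measure E) [μ.IsAddHaarMeasure]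
    (ν : Measure F) [ν.IsAddHaarMeasure] (e : E ≃L[ℝ] F) {s : Set F} (hs : ν s = 0) :
    μ (e ⁻¹' s) = 0 := by
  have hac : μ.map e ≪ ν := Measure.absolutelyContinuous_isAddHaarMeasure _ _
  exact (e.toHomeomorph.toMeasurableEquiv.map_apply s).symm.trans (hac hs)

theorem MvPolynomial.addHaar_setOf_eval_eq_zero {ι : Type*} [Fintype ι] (μ : Measure E)
    [μ.IsAddHaarMeasure] (e : E ≃L[ℝ] (ι → ℂ)) {p : MvPolynomial ι ℂ} (hp : p ≠ 0) :
    μ {x | eval (e x) p = 0} = 0 := by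
  let σ := Fintype.equivFin ι
  let e' := e.trans (ContinuousLinearEquiv.piCongrLeft ℝ (fun _ => ℂ) σ)
  have hp' : rename σ p ≠ 0 := (rename_injective σ σ.injective).ne_iff.mpr hp
  have hset : {x | eval (e x) p = 0} = e' ⁻¹' {y | eval y (rename σ p) = 0} := by
    ext x
    have hσ : (ContinuousLinearEquiv.piCongrLeft ℝ (fun _ => ℂ) σ (e x) : Fin _ → ℂ) ∘ σ = e x :=
      _root_.funext (Equiv.piCongrLeft_apply_apply (fun _ => ℂ) σ (e x))
    simp [e', eval_rename, hσ]
  rw [hset]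
  exact e'.addHaar_preimage_eq_zero μ volume (MvPolynomial.volume_setOf_eval_eq_zero_fin hp')
end

namespace Matrix

variable {ι κ R S : Type*}

def stackMulDiagonal [Mul R] (K : Matrix κ (ι × κ) R) (x : ι → ι × κ → R) :
    Matrix (ι × κ) (ι × κ) R :=
  of fun p p' => K p.2 p' * x p.1 p'

theorem stackMulDiagonal_map [NonAssocSemiring R] [NonAssocSemiring S] (f : R →+* S)
    (K : Matrix κ (ι × κ) R) (x : ι → ι × κ → R) :
    (stackMulDiagonal K x).map f = stackMulDiagonal (K.map f) fun i p => f (x i p) := by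
  ext p p'
  simp [stackMulDiagonal]

theorem rank_eq_card_of_isUnit_submatrix {m n : Type*} [Fintype m] [Fintype n] [DecidableEq m]
    [CommSemiring R] [StrongRankCondition R] (A : Matrix m n R) (c : m → n)
    (hA : IsUnit (A.submatrix id c)) : A.rank = Fintype.card m :=
  le_antisymm A.rank_le_card_height (rank_of_isUnit _ hA ▸ rank_submatrix_le A id c)

variable [Fintype ι] [Fintype κ] [DecidableEq ι] [DecidableEq κ]

theorem det_stackMulDiagonal_blockIndicator [CommRing R] (K : Matrix κ (ι × κ) R) :
    (stackMulDiagonal K fun i p => if i = p.1 then 1 else 0).det =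
      ∏ i, (K.submatrix id (i, ·)).det := by
  have hblock : (stackMulDiagonal K fun i p => if i = p.1 then 1 else 0) =
      (blockDiagonal fun i => K.submatrix id (i, ·)).submatrix (Equiv.prodComm ι κ)
        (Equiv.prodComm ι κ) := by
    ext ⟨i, q⟩ ⟨i', q'⟩
    by_cases hi : i = i' <;> simp [stackMulDiagonal, blockDiagonal_apply, hi]
  rw [hblock, det_submatrix_equiv_self, det_blockDiagonal]

theorem volume_setOf_not_isUnit_stackMulDiagonal (K : Matrix κ (ι × κ) ℂ)
    (hK : ∀ i, IsUnit (K.submatrix id (i, ·))) :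
    volume {x | ¬ IsUnit (stackMulDiagonal K x)} = 0 := by
  let P : MvPolynomial (ι × (ι × κ)) ℂ :=
    (stackMulDiagonal (K.map MvPolynomial.C) fun i p => MvPolynomial.X (i, p)).det
  have heval : ∀ x, MvPolynomial.eval x P = (stackMulDiagonal K (Function.curry x)).det := by
    intro x
    rw [RingHom.map_det, RingHom.mapMatrix_apply, stackMulDiagonal_map]
    congr 1
    ext p p'
    simp [stackMulDiagonal]
  have hP : P ≠ 0 := by
    intro h0
    have := heval (Function.uncurry fun i p => if i = p.1 then 1 else 0)
    rw [h0, map_zero, Function.curry_uncurry, det_stackMulDiagonal_blockIndicator] at this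
    exact Finset.prod_ne_zero_iff.mpr (fun i _ => ((hK i).map detMonoidHom).ne_zero) this.symm
  -- instance search does not find this Haar measure on a nested pi type
  have : (volume : Measure (ι → ι × κ → ℂ)).IsAddHaarMeasure := Measure.pi.isAddHaarMeasure _
  refine measure_mono_null (fun x hx => ?_) (MvPolynomial.addHaar_setOf_eval_eq_zero volume
    (LinearEquiv.curry ℝ ℂ ι (ι × κ)).symm.toContinuousLinearEquiv hP)
  simpa [heval, isUnit_iff_isUnit_det] using hx

end Matrix

theorem stmt11_general (M Q T : ℕ) (h : M * Q ≤ T)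
    (A : Matrix (Fin Q) (Fin T) ℂ)
    (hA : ∀ m : Fin M,
      IsUnit (Matrix.of fun q q' : Fin Q => A q (emb M Q T h (m, q')))) :
    volume {X₀ : Fin M → (Fin M × Fin Q) → ℂ |
        ¬ IsUnit (Matrix.of fun p p' : Fin M × Fin Q =>
            A p.2 (emb M Q T h p') * X₀ p.1 p')} = 0 ∧
    ∀ᵐ X₀ : Fin M → (Fin M × Fin Q) → ℂ ∂volume,
      ∀ X : Matrix (Fin M) (Fin T) ℂ,
        (∀ (m : Fin M) (p' : Fin M × Fin Q), X m (emb M Q T h p') = X₀ m p') →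
        IsUnit (CR M Q T h A X) ∧ (Rmat M Q T A X).rank = M * Q := by
  have hnull := volume_setOf_not_isUnit_stackMulDiagonal (A.submatrix id (emb M Q T h)) hA
  refine ⟨hnull, ?_⟩
  filter_upwards [measure_eq_zero_iff_ae_notMem.mp hnull] with X₀ hX₀ X hX
  have hCR : CR M Q T h A X = stackMulDiagonal (A.submatrix id (emb M Q T h)) X₀ := by
    ext p p'
    simp [CR, Rmat, stackMulDiagonal, hX]
  have hunit : IsUnit (CR M Q T h A X) := hCR ▸ not_not.mp hX₀
  exact ⟨hunit, by simpa using (Rmat M Q T A X).rank_eq_card_of_isUnit_submatrix _ hunit⟩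

/-- If for each `m` the `Q×Q` submatrix of `A` formed by columns
`(m-1)Q+1,…,mQ` is invertible, then the set of `X₀ ∈ ℂ^{M×MQ}` (the first `MQ`
columns of `X`) for which `C_R` is singular has Lebesgue measure zero; in particular,
for almost every `X₀`, `C_R` is invertible and `R(X)` has rank `MQ`. -/
theorem stmt11 (M Q T : ℕ) (hM : 0 < M) (hQ : 0 < Q) (hT : 0 < T) (h : M * Q ≤ T)
    (A : Matrix (Fin Q) (Fin T) ℂ)
    (hA : ∀ m : Fin M,
      IsUnit (Matrix.of fun q q' : Fin Q => A q (emb M Q T h (m, q')))) :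
    volume {X₀ : Fin M → (Fin M × Fin Q) → ℂ |
        ¬ IsUnit (Matrix.of fun p p' : Fin M × Fin Q =>
            A p.2 (emb M Q T h p') * X₀ p.1 p')} = 0 ∧
    ∀ᵐ X₀ : Fin M → (Fin M × Fin Q) → ℂ ∂volume,
      ∀ X : Matrix (Fin M) (Fin T) ℂ,
        (∀ (m : Fin M) (p' : Fin M × Fin Q), X m (emb M Q T h p') = X₀ m p') →
        IsUnit (CR M Q T h A X) ∧ (Rmat M Q T A X).rank = M * Q :=
  stmt11_general M Q T h A hA
end
end

section
/- Suppose that every choice of Q columns from among the first M(Q+1) columns of A is linearly independent (equivalently, every Q×Q submatrix formed by choosing Q of these columns is invertible). Then there exists X₀ ∈ ℂ^{M×MQ} such that, letting X have first MQ columns equal to X₀ and satisfy the training condition x_m(MQ+n) = δ_{n−m} (1 ≤ n, m ≤ M), the matrix C_R(X) is invertible and det(J(X)) ≠ 0. -/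
open Matrix

noncomputable section

/-- If every choice of `Q` columns from among the first `M(Q+1)` columns
of `A` is linearly independent (every such `Q×Q` submatrix is invertible), then there
exists `X₀ ∈ ℂ^{M×MQ}` such that, letting `X` have first `MQ` columns `X₀` and satisfy
the training condition, `C_R(X)` is invertible and `det(J(X)) ≠ 0`. -/
theorem stmt13 (M Q T : ℕ) (hM : 0 < M) (hQ : 0 < Q) (hT : 0 < T) (h : M * (Q + 1) ≤ T)
    (A : Matrix (Fin Q) (Fin T) ℂ)
    (hA : ∀ f : Fin Q → Fin (M * (Q + 1)), Function.Injective f →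
      IsUnit (Matrix.of fun q q' : Fin Q => A q (Fin.castLE h (f q')))) :
    ∃ X₀ : Fin M → (Fin M × Fin Q) → ℂ, ∃ X : Matrix (Fin M) (Fin T) ℂ,
      (∀ (m : Fin M) (p' : Fin M × Fin Q),
          X m (emb M Q T (le_trans (Nat.mul_le_mul_left M (Nat.le_succ Q)) h) p') = X₀ m p') ∧
      (∀ n m : Fin M, X m (tcol M Q T h n) = if n = m then 1 else 0) ∧
      IsUnit (CR M Q T (le_trans (Nat.mul_le_mul_left M (Nat.le_succ Q)) h) A X) ∧
      (Jmat M Q T h A X).det ≠ 0 := by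
  classical
  set h1 : M * Q ≤ T := le_trans (Nat.mul_le_mul_left M (Nat.le_succ Q)) h with hh1
  have natblock : ∀ a b x : ℕ, x < Q → a ≠ b → ¬ (b * Q ≤ a * Q + x ∧ a * Q + x < b * Q + Q) := by
    intro a b x hx hab
    rcases Nat.lt_or_ge a b with hlt | hge
    · have h2 : (a + 1) * Q ≤ b * Q := Nat.mul_le_mul_right Q hlt
      have h3 : (a + 1) * Q = a * Q + Q := by ring
      omega
    · have hgt : b < a := lt_of_le_of_ne hge (Ne.symm hab)
      have h2 : (b + 1) * Q ≤ a * Q := Nat.mul_le_mul_right Q hgt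
      have h3 : (b + 1) * Q = b * Q + Q := by ring
      omega
  have emblt : ∀ (m : Fin M) (q : Fin Q), m.1 * Q + q.1 < M * Q := by
    intro m q
    have h2 : (m.1 + 1) * Q ≤ M * Q := Nat.mul_le_mul_right Q m.2
    have h3 : (m.1 + 1) * Q = m.1 * Q + Q := by ring
    have := q.2
    omega
  have hMQle : M * Q ≤ M * (Q + 1) := Nat.mul_le_mul_left M (Nat.le_succ Q)
  set X : Matrix (Fin M) (Fin T) ℂ := Matrix.of fun m t =>
    if m.1 * Q ≤ t.1 ∧ t.1 < m.1 * Q + Q then (1 : ℂ) else if t.1 = M * Q + m.1 then 1 else 0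
    with hXdef
  have hXemb : ∀ (m : Fin M) (p' : Fin M × Fin Q),
      X m (emb M Q T h1 p') = if p'.1 = m then 1 else 0 := by
    intro m p'
    show (if m.1 * Q ≤ (emb M Q T h1 p').1 ∧ (emb M Q T h1 p').1 < m.1 * Q + Q then (1:ℂ)
        else if (emb M Q T h1 p').1 = M * Q + m.1 then 1 else 0) = _
    have hev : (emb M Q T h1 p').1 = p'.1.1 * Q + p'.2.1 := rfl
    rw [hev]
    by_cases hm : p'.1 = m
    · have : m.1 * Q ≤ p'.1.1 * Q + p'.2.1 ∧ p'.1.1 * Q + p'.2.1 < m.1 * Q + Q := by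
        rw [hm.symm]; exact ⟨Nat.le_add_right _ _, by have := p'.2.2; omega⟩
      rw [if_pos this, if_pos hm]
    · have hne : p'.1.1 ≠ m.1 := fun hc => hm (Fin.ext hc)
      rw [if_neg (natblock _ _ _ p'.2.2 hne), if_neg (by have := emblt p'.1 p'.2; omega),
        if_neg hm]
  have hXt : ∀ n m : Fin M, X m (tcol M Q T h n) = if n = m then 1 else 0 := by
    intro n m
    show (if m.1 * Q ≤ M * Q + n.1 ∧ M * Q + n.1 < m.1 * Q + Q then (1:ℂ)
        else if M * Q + n.1 = M * Q + m.1 then 1 else 0) = _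
    have h2 : (m.1 + 1) * Q ≤ M * Q := Nat.mul_le_mul_right Q m.2
    have h3 : (m.1 + 1) * Q = m.1 * Q + Q := by ring
    rw [if_neg (by omega)]
    by_cases hnm : n = m
    · rw [if_pos (by rw [hnm]), if_pos hnm]
    · rw [if_neg (by intro hc; exact hnm (Fin.ext (by omega))), if_neg hnm]
  set D : Fin M → Matrix (Fin Q) (Fin Q) ℂ :=
    fun m => Matrix.of fun q q' => A q (emb M Q T h1 (m, q')) with hDdef
  have hD : ∀ m, IsUnit (D m) := by
    intro m
    have hf : Function.Injective (fun q' : Fin Q =>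
        (⟨m.1 * Q + q'.1, by have := emblt m q'; omega⟩ : Fin (M * (Q + 1)))) := by
      intro x y hxy
      have := congrArg Fin.val hxy
      simp only at this
      exact Fin.ext (by omega)
    exact hA _ hf
  have hDdet : ∀ m, (D m).det ≠ 0 := by
    intro m
    exact ((Matrix.isUnit_iff_isUnit_det _).mp (hD m)).ne_zero
  set a : Fin M → Fin Q → ℂ := fun j q => A q (tcol M Q T h j) with hadef
  set v : Fin M → Fin Q → ℂ := fun j => (D j)⁻¹ *ᵥ a j with hvdef
  have hv : ∀ j q, v j q ≠ 0 := by
    intro j q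
    have hvq : v j q = (D j).det⁻¹ * ((D j).updateCol q (a j)).det := by
      rw [hvdef]
      simp only [Matrix.inv_def, Matrix.smul_mulVec, Pi.smul_apply,
        ← Matrix.cramer_eq_adjugate_mulVec, Matrix.cramer_apply, smul_eq_mul,
        Ring.inverse_eq_inv']
    set g : Fin Q → Fin (M * (Q + 1)) := fun q₂ =>
      if q₂ = q then ⟨M * Q + j.1, by
        have h4 : M * (Q + 1) = M * Q + M := by ring
        have := j.2; omega⟩
      else ⟨j.1 * Q + q₂.1, by have := emblt j q₂; omega⟩ with hgdef
    have hg : Function.Injective g := by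
      intro x y hxy
      by_cases hx : x = q <;> by_cases hy : y = q
      · rw [hx, hy]
      · exfalso
        rw [hgdef] at hxy
        simp only [if_pos hx, if_neg hy] at hxy
        have := congrArg Fin.val hxy
        simp only at this
        have := emblt j y
        omega
      · exfalso
        rw [hgdef] at hxy
        simp only [if_neg hx, if_pos hy] at hxy
        have := congrArg Fin.val hxy
        simp only at this
        have := emblt j x
        omega
      · rw [hgdef] at hxy
        simp only [if_neg hx, if_neg hy] at hxy
        have := congrArg Fin.val hxy
        simp only at this
        exact Fin.ext (by omega)
    have hup : (D j).updateCol q (a j) =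
        Matrix.of fun q₁ q₂ : Fin Q => A q₁ (Fin.castLE h (g q₂)) := by
      ext q₁ q₂
      rw [Matrix.updateCol_apply]
      by_cases hq₂ : q₂ = q
      · rw [if_pos hq₂, hgdef]
        simp only [Matrix.of_apply, if_pos hq₂]
        rfl
      · rw [if_neg hq₂, hgdef]
        simp only [Matrix.of_apply, if_neg hq₂]
        rfl
    have hupdet : ((D j).updateCol q (a j)).det ≠ 0 := by
      rw [hup]
      exact ((Matrix.isUnit_iff_isUnit_det _).mp (hA g hg)).ne_zero
    rw [hvq]
    exact mul_ne_zero (inv_ne_zero (hDdet j)) hupdet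
  set e : Fin M × Fin Q ≃ Fin Q × Fin M := Equiv.prodComm _ _ with hedef
  have hCR : CR M Q T h1 A X = (Matrix.blockDiagonal D).submatrix e e := by
    ext ⟨m, q⟩ ⟨m', q'⟩
    show A q (emb M Q T h1 (m', q')) * X m (emb M Q T h1 (m', q')) = _
    rw [hXemb]
    simp only [Matrix.submatrix_apply, hedef, Equiv.prodComm_apply, Prod.swap_prod_mk,
      Matrix.blockDiagonal_apply]
    by_cases hmm : m = m'
    · rw [if_pos hmm.symm, if_pos hmm, mul_one, hDdef]
      simp only [Matrix.of_apply]
      rw [hmm]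
    · rw [if_neg (fun hc => hmm hc.symm), if_neg hmm, mul_zero]
  have hCRdet : (CR M Q T h1 A X).det ≠ 0 := by
    rw [hCR, Matrix.det_submatrix_equiv_self, Matrix.det_blockDiagonal]
    exact Finset.prod_ne_zero_iff.mpr fun m _ => hDdet m
  have hCRunit : IsUnit (CR M Q T h1 A X) := by
    rw [Matrix.isUnit_iff_isUnit_det]
    exact isUnit_iff_ne_zero.mpr hCRdet
  have hCRinv : (CR M Q T h1 A X)⁻¹ =
      (Matrix.blockDiagonal fun m => (D m)⁻¹).submatrix e e := by
    apply Matrix.inv_eq_right_inv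
    rw [hCR, Matrix.submatrix_mul_equiv, ← Matrix.blockDiagonal_mul]
    have hone : (fun k => D k * (D k)⁻¹) = fun _ => (1 : Matrix (Fin Q) (Fin Q) ℂ) := by
      funext k
      exact Matrix.mul_nonsing_inv _ (isUnit_iff_ne_zero.mpr (hDdet k))
    rw [hone,
      show (Matrix.blockDiagonal fun _ : Fin M => (1 : Matrix (Fin Q) (Fin Q) ℂ)) = 1 from
        Matrix.blockDiagonal_one,
      Matrix.submatrix_one_equiv]
  have hB : ∀ (p' : Fin M × Fin Q) (j : Fin M),
      Bmat M Q T h1 A X p' (tcol M Q T h j) = if p'.1 = j then v j p'.2 else 0 := by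
    rintro ⟨m', q'⟩ j
    show ∑ p : Fin M × Fin Q, (CR M Q T h1 A X)⁻¹ (m', q') p
        * Rmat M Q T A X p (tcol M Q T h j) = _
    rw [hCRinv, Fintype.sum_prod_type]
    have hterm : ∀ (n : Fin M) (q2 : Fin Q),
        (Matrix.blockDiagonal fun m => (D m)⁻¹).submatrix e e (m', q') (n, q2)
          * Rmat M Q T A X (n, q2) (tcol M Q T h j)
        = if n = j then (if m' = j then (D j)⁻¹ q' q2 * a j q2 else 0) else 0 := by
      intro n q2
      show _ * (A q2 (tcol M Q T h j) * X n (tcol M Q T h j)) = _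
      rw [hXt]
      simp only [Matrix.submatrix_apply, hedef, Equiv.prodComm_apply, Prod.swap_prod_mk,
        Matrix.blockDiagonal_apply]
      by_cases h₁ : n = j
      · subst h₁
        simp only [if_pos (rfl : n = n), mul_one]
        by_cases h₂ : m' = n <;> simp [h₂, hadef]
      · rw [if_neg (show ¬ (j = n) from fun hc => h₁ hc.symm), mul_zero, mul_zero,
          if_neg h₁]
    rw [Finset.sum_congr rfl fun n _ => Finset.sum_congr rfl fun q2 _ => hterm n q2]
    have hpull : ∀ n : Fin M,
        (∑ q2 : Fin Q, if n = j then (if m' = j then (D j)⁻¹ q' q2 * a j q2 else 0) else 0)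
        = if n = j then (if m' = j then ∑ q2 : Fin Q, (D j)⁻¹ q' q2 * a j q2 else 0) else 0 := by
      intro n
      split_ifs <;> simp
    rw [Finset.sum_congr rfl fun n _ => hpull n, Finset.sum_ite_eq' Finset.univ j,
      if_pos (Finset.mem_univ j)]
    by_cases hm' : m' = j
    · rw [if_pos hm', if_pos hm']
      rfl
    · rw [if_neg hm', if_neg hm']
  have hJ : Jmat M Q T h A X =
      (Matrix.blockDiagonal fun j => D j * Matrix.diagonal (v j)).submatrix e e := by
    ext ⟨j, q⟩ ⟨m', q'⟩
    show A q (emb M Q T h1 (m', q')) * Bmat M Q T h1 A X (m', q') (tcol M Q T h j) = _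
    rw [hB]
    simp only [Matrix.submatrix_apply, hedef, Equiv.prodComm_apply, Prod.swap_prod_mk,
      Matrix.blockDiagonal_apply, Matrix.mul_diagonal]
    by_cases hmm : m' = j
    · rw [if_pos hmm, if_pos hmm.symm, hDdef]
      simp only [Matrix.of_apply]
      rw [hmm]
    · rw [if_neg hmm, if_neg (fun hc => hmm hc.symm), mul_zero]
  have hJdet : (Jmat M Q T h A X).det ≠ 0 := by
    rw [hJ, Matrix.det_submatrix_equiv_self, Matrix.det_blockDiagonal]
    refine Finset.prod_ne_zero_iff.mpr fun j _ => ?_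
    rw [Matrix.det_mul, Matrix.det_diagonal]
    exact mul_ne_zero (hDdet j) (Finset.prod_ne_zero_iff.mpr fun q _ => hv j q)
  exact ⟨fun m p' => if p'.1 = m then 1 else 0, X, hXemb, hXt, hCRunit, hJdet⟩
end
end

section
/- (Injectivity of the noiseless map / correctness of the recovery algorithm.) Let X, X' ∈ ℂ^{M×T} both satisfy the training condition x_m(MQ+n) = δ_{n−m} for 1 ≤ n, m ≤ M. Assume: (i) C_R(X) and C_R(X') are invertible; (ii) J(X) is invertible; (iii) A^1(t) ≠ 0 for every t with M(Q+1) < t ≤ T, where A^1 is the first row of A; and (iv) the row space of R(X) equals the row space of R(X'). Then X = X'. Consequently, under these conditions the transmitted signal X is uniquely determined by the subspace F_A(X) = row space of R(X). -/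
open Matrix

noncomputable section

/-!
Since `C_R` is the block of `R` on the first `MQ` columns, `B = C_R⁻¹ R` is the unique matrix
with the row space of `R` that is the identity on those columns; so the row space determines
`B`, and with it `J`. Reading `C_R B = R` at the training columns `MQ + n` gives
`J · X[:, 1:MQ]ᵀ = D` with `D` depending on `A` alone, so the invertibility of `J` determines the
first `MQ` columns of `X`. These determine `C_R`, hence `R = C_R B`, whose first row
`A^1(t) x_m(t)` recovers the remaining columns where `A^1(t) ≠ 0`.
-/

namespace Matrix

variable {ι κ K : Type*} [Fintype ι]

theorem span_range_row_mul_of_isUnit [DecidableEq ι] [CommRing K] {N : Matrix ι ι K}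
    (hN : IsUnit N) (R : Matrix ι κ K) :
    Submodule.span K (Set.range (N * R).row) = Submodule.span K (Set.range R.row) := by
  rw [← range_vecMulLinear, ← range_vecMulLinear]
  ext v
  simp only [LinearMap.mem_range, vecMulLinear_apply, ← vecMul_vecMul]
  constructor
  · rintro ⟨x, rfl⟩
    exact ⟨_, rfl⟩
  · rintro ⟨y, rfl⟩
    obtain ⟨x, rfl⟩ := vecMul_surjective_iff_isUnit.mpr hN y
    exact ⟨x, rfl⟩

theorem exists_eq_mul_of_span_range_row_le [Semiring K] {B B' : Matrix ι κ K}
    (hspan : Submodule.span K (Set.range B'.row) ≤ Submodule.span K (Set.range B.row)) :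
    ∃ C : Matrix ι ι K, B' = C * B := by
  rw [← range_vecMulLinear B] at hspan
  choose C hC using fun i => hspan (Submodule.subset_span (Set.mem_range_self i))
  exact ⟨C, ext fun i j => (congr_fun (hC i) j).symm⟩

theorem eq_of_span_range_row_le_of_submatrix_eq_one [DecidableEq ι] [Semiring K]
    {B B' : Matrix ι κ K} (e : ι → κ) (hB : B.submatrix id e = 1)
    (hB' : B'.submatrix id e = 1)
    (hspan : Submodule.span K (Set.range B'.row) ≤ Submodule.span K (Set.range B.row)) :
    B = B' := by
  obtain ⟨C, rfl⟩ := exists_eq_mul_of_span_range_row_le hspan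
  have hC : C = 1 := by
    rw [← hB', submatrix_mul C B id id e Function.bijective_id, submatrix_id_id, hB, mul_one]
  rw [hC, Matrix.one_mul]

end Matrix

section

variable {M Q T : ℕ} (h0 : M * Q ≤ T) {A : Matrix (Fin Q) (Fin T) ℂ}
  {X X' Y : Matrix (Fin M) (Fin T) ℂ}

theorem CR_eq_submatrix : CR M Q T h0 A Y = (Rmat M Q T A Y).submatrix id (emb M Q T h0) := rfl

theorem CR_congr (hV : X.submatrix id (emb M Q T h0) = X'.submatrix id (emb M Q T h0)) :
    CR M Q T h0 A X = CR M Q T h0 A X' := by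
  ext p p'
  simp only [CR, Rmat, of_apply]
  exact congrArg _ (congr_fun₂ hV p.1 p')

variable {h0}

theorem CR_mul_Bmat (hC : IsUnit (CR M Q T h0 A Y)) :
    CR M Q T h0 A Y * Bmat M Q T h0 A Y = Rmat M Q T A Y :=
  mul_nonsing_inv_cancel_left _ _ ((isUnit_iff_isUnit_det _).mp hC)

theorem Bmat_submatrix_emb (hC : IsUnit (CR M Q T h0 A Y)) :
    (Bmat M Q T h0 A Y).submatrix id (emb M Q T h0) = 1 := by
  rw [Bmat, submatrix_mul _ _ id id _ Function.bijective_id, submatrix_id_id, ← CR_eq_submatrix,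
    nonsing_inv_mul _ ((isUnit_iff_isUnit_det _).mp hC)]

theorem span_range_row_Bmat (hC : IsUnit (CR M Q T h0 A Y)) :
    Submodule.span ℂ (Set.range (Bmat M Q T h0 A Y).row)
      = Submodule.span ℂ (Set.range (Rmat M Q T A Y).row) :=
  span_range_row_mul_of_isUnit (isUnit_nonsing_inv_iff.mpr hC) _

theorem Bmat_eq_of_span_eq (hC : IsUnit (CR M Q T h0 A X)) (hC' : IsUnit (CR M Q T h0 A X'))
    (hspan : Submodule.span ℂ (Set.range (Rmat M Q T A X).row)
      = Submodule.span ℂ (Set.range (Rmat M Q T A X').row)) :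
    Bmat M Q T h0 A X = Bmat M Q T h0 A X' :=
  eq_of_span_range_row_le_of_submatrix_eq_one _ (Bmat_submatrix_emb hC) (Bmat_submatrix_emb hC')
    (by rw [span_range_row_Bmat hC, span_range_row_Bmat hC', hspan])

variable (h : M * (Q + 1) ≤ T)

theorem Jmat_eq_of_Bmat_eq (hB : Bmat M Q T h0 A X = Bmat M Q T h0 A X') :
    Jmat M Q T h A X = Jmat M Q T h A X' := by
  ext p p'
  simp only [Jmat, of_apply]
  rw [hB]

theorem Jmat_mul_transpose_submatrix_emb
    (htrain : ∀ n m : Fin M, Y m (tcol M Q T h n) = if n = m then 1 else 0)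
    (hC : IsUnit (CR M Q T h0 A Y)) :
    Jmat M Q T h A Y * (Y.submatrix id (emb M Q T h0))ᵀ
      = of fun p m => if p.1 = m then A p.2 (tcol M Q T h p.1) else 0 := by
  ext p m
  have hR := congr_fun₂ (CR_mul_Bmat hC) (m, p.2) (tcol M Q T h p.1)
  simp only [mul_apply, CR, Rmat, Jmat, of_apply, transpose_apply, submatrix_apply, id,
    htrain, mul_ite, mul_one, mul_zero] at hR ⊢
  rw [← hR]
  exact Finset.sum_congr rfl fun j _ => mul_right_comm _ _ _

theorem submatrix_emb_eq_of_Bmat_eq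
    (htrain : ∀ n m : Fin M, X m (tcol M Q T h n) = if n = m then 1 else 0)
    (htrain' : ∀ n m : Fin M, X' m (tcol M Q T h n) = if n = m then 1 else 0)
    (hC : IsUnit (CR M Q T h0 A X)) (hC' : IsUnit (CR M Q T h0 A X'))
    (hJ : IsUnit (Jmat M Q T h A X)) (hB : Bmat M Q T h0 A X = Bmat M Q T h0 A X') :
    X.submatrix id (emb M Q T h0) = X'.submatrix id (emb M Q T h0) := by
  have := hJ.invertible
  apply transpose_injective
  apply mul_right_injective_of_invertible (Jmat M Q T h A X)
  dsimp only
  rw [Jmat_mul_transpose_submatrix_emb h htrain hC, Jmat_eq_of_Bmat_eq h hB,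
    Jmat_mul_transpose_submatrix_emb h htrain' hC']

end

theorem exists_emb_or_exists_tcol_or_le {M Q T : ℕ} (h0 : M * Q ≤ T) (h : M * (Q + 1) ≤ T)
    (t : Fin T) :
    (∃ p, emb M Q T h0 p = t) ∨ (∃ n, tcol M Q T h n = t) ∨ M * (Q + 1) ≤ t := by
  rcases lt_or_ge t.1 (M * Q) with ht | ht
  · have hQ : 0 < Q := Nat.pos_of_mul_pos_left (Nat.zero_lt_of_lt ht)
    refine Or.inl ⟨(⟨t / Q, Nat.div_lt_of_lt_mul (by rwa [mul_comm])⟩,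
      ⟨t % Q, Nat.mod_lt _ hQ⟩), Fin.ext ?_⟩
    simp only [emb]
    exact Nat.div_add_mod' t Q
  · rcases lt_or_ge t.1 (M * (Q + 1)) with ht' | ht'
    · rw [mul_add, mul_one] at ht'
      exact Or.inr (Or.inl ⟨⟨t - M * Q, by omega⟩, Fin.ext (by simp only [tcol]; omega)⟩)
    · exact Or.inr (Or.inr ht')

theorem stmt15_general (M Q T : ℕ) (hQ : 0 < Q) (h : M * (Q + 1) ≤ T)
    (A : Matrix (Fin Q) (Fin T) ℂ) (X X' : Matrix (Fin M) (Fin T) ℂ)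
    (htrain : ∀ n m : Fin M, X m (tcol M Q T h n) = if n = m then 1 else 0)
    (htrain' : ∀ n m : Fin M, X' m (tcol M Q T h n) = if n = m then 1 else 0)
    (hC : IsUnit (CR M Q T (le_trans (Nat.mul_le_mul_left M (Nat.le_succ Q)) h) A X))
    (hC' : IsUnit (CR M Q T (le_trans (Nat.mul_le_mul_left M (Nat.le_succ Q)) h) A X'))
    (hJ : IsUnit (Jmat M Q T h A X))
    (hA1 : ∀ t : Fin T, M * (Q + 1) ≤ t.1 → A ⟨0, hQ⟩ t ≠ 0)
    (hspan : Submodule.span ℂ (Set.range fun p : Fin M × Fin Q => Rmat M Q T A X p)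
      = Submodule.span ℂ (Set.range fun p : Fin M × Fin Q => Rmat M Q T A X' p)) :
    X = X' := by
  have h0 : M * Q ≤ T := (Nat.mul_le_mul_left M Q.le_succ).trans h
  have hB := Bmat_eq_of_span_eq hC hC' hspan
  have hV := submatrix_emb_eq_of_Bmat_eq h htrain htrain' hC hC' hJ hB
  have hR : Rmat M Q T A X = Rmat M Q T A X' := by
    rw [← CR_mul_Bmat hC, ← CR_mul_Bmat hC', CR_congr h0 hV, hB]
  ext m t
  rcases exists_emb_or_exists_tcol_or_le h0 h t with ⟨p, rfl⟩ | ⟨n, rfl⟩ | ht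
  · exact congr_fun₂ hV m p
  · rw [htrain, htrain']
  · exact mul_left_cancel₀ (hA1 t ht) (congr_fun₂ hR (m, ⟨0, hQ⟩) t)

/-- injectivity of the noiseless map / correctness of the recovery
algorithm: if `X, X'` both satisfy the training condition, `C_R(X)` and `C_R(X')` are
invertible, `J(X)` is invertible, `A^1(t) ≠ 0` for every `t` with `M(Q+1) < t ≤ T`
(0-indexed: `M(Q+1) ≤ t`), and the row spaces of `R(X)` and `R(X')` coincide, then
`X = X'`: the transmitted signal is uniquely determined by the subspace
`F_A(X) = row space of R(X)`. -/
theorem stmt15 (M Q T : ℕ) (hM : 0 < M) (hQ : 0 < Q) (hT : 0 < T) (h : M * (Q + 1) ≤ T)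
    (A : Matrix (Fin Q) (Fin T) ℂ) (X X' : Matrix (Fin M) (Fin T) ℂ)
    (htrain : ∀ n m : Fin M, X m (tcol M Q T h n) = if n = m then 1 else 0)
    (htrain' : ∀ n m : Fin M, X' m (tcol M Q T h n) = if n = m then 1 else 0)
    (hC : IsUnit (CR M Q T (le_trans (Nat.mul_le_mul_left M (Nat.le_succ Q)) h) A X))
    (hC' : IsUnit (CR M Q T (le_trans (Nat.mul_le_mul_left M (Nat.le_succ Q)) h) A X'))
    (hJ : IsUnit (Jmat M Q T h A X))
    (hA1 : ∀ t : Fin T, M * (Q + 1) ≤ t.1 → A ⟨0, hQ⟩ t ≠ 0)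
    (hspan : Submodule.span ℂ (Set.range fun p : Fin M × Fin Q => Rmat M Q T A X p)
      = Submodule.span ℂ (Set.range fun p : Fin M × Fin Q => Rmat M Q T A X' p)) :
    X = X' :=
  stmt15_general M Q T hQ h A X X' htrain htrain' hC hC' hJ hA1 hspan
end
end
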